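/- For every k ≥ 1, a Sylow 2-subgroup of the alternating group A_{4k+2} is isomorphic (as a group) to a Sylow 2-subgroup of the symmetric group S_{4k}. -/

import Mathlib

/-!
Twisting a permutation `σ` of `n` points by the transposition of two extra points exactly when `σ`
is odd embeds `S_n` into `A_{n+2}` with index `(n+2)(n+1)/2`. For `n = 4k` this index
`(2k+1)(4k+1)` is odd, so the embedding carries Sylow 2-subgroups of `S_{4k}` onto Sylow
2-subgroups of `A_{4k+2}`.
-/

open Equiv.Perm

theorem MonoidHom.index_range_mul_card {H G : Type*} [Group H] [Group G] {f : H →* G}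
    (hf : Function.Injective f) : f.range.index * Nat.card H = Nat.card G := by
  rw [← f.range.index_mul_card, Nat.card_congr (f.ofInjective hf).toEquiv]

theorem Sylow.nonempty_mulEquiv_of_injective {H G : Type*} [Group H] [Group G] [Finite G]
    {p : ℕ} [Fact p.Prime] {f : H →* G} (hf : Function.Injective f)
    (hindex : ¬ p ∣ f.range.index) (P : Sylow p G) (Q : Sylow p H) : Nonempty (P ≃* Q) := by
  have : Finite H := Finite.of_injective f hf
  have hQ : ¬ p ∣ (Q.map f).index := by
    rw [Subgroup.index_map_of_injective _ hf]
    exact (Fact.out : p.Prime).not_dvd_mul Q.not_dvd_index hindex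
  exact ⟨(P.equiv ((Q.2.map f).toSylow hQ)).trans (Q.equivMapOfInjective f hf).symm⟩

namespace Equiv.Perm

noncomputable def signFinTwo : Perm (Fin 2) ≃* ℤˣ :=
  MulEquiv.ofBijective sign ⟨by decide, sign_surjective (Fin 2)⟩

section

variable (α : Type*) [Fintype α] [DecidableEq α]

noncomputable def toAlternatingGroupSumFinTwo : Perm α →* alternatingGroup (α ⊕ Fin 2) :=
  ((sumCongrHom α (Fin 2)).comp
      ((MonoidHom.id _).prod (signFinTwo.symm.toMonoidHom.comp sign))).codRestrict _
    fun σ => by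
      rw [mem_alternatingGroup]
      simp only [MonoidHom.comp_apply, MonoidHom.prod_apply, sumCongrHom_apply, sign_sumCongr]
      show sign σ * signFinTwo (signFinTwo.symm (sign σ)) = 1
      rw [MulEquiv.apply_symm_apply, Int.units_mul_self]

theorem toAlternatingGroupSumFinTwo_injective :
    Function.Injective (toAlternatingGroupSumFinTwo α) :=
  fun _ _ h => congrArg Prod.fst (sumCongrHom_injective (congrArg Subtype.val h))

end

noncomputable def toAlternatingGroupFinAddTwo (n : ℕ) :
    Perm (Fin n) →* alternatingGroup (Fin (n + 2)) :=
  finSumFinEquiv.altCongrHom.toMonoidHom.comp (toAlternatingGroupSumFinTwo (Fin n))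

theorem toAlternatingGroupFinAddTwo_injective (n : ℕ) :
    Function.Injective (toAlternatingGroupFinAddTwo n) :=
  finSumFinEquiv.altCongrHom.injective.comp (toAlternatingGroupSumFinTwo_injective _)

theorem two_mul_index_range_toAlternatingGroupFinAddTwo (n : ℕ) :
    2 * (toAlternatingGroupFinAddTwo n).range.index = (n + 2) * (n + 1) := by
  have h := MonoidHom.index_range_mul_card (toAlternatingGroupFinAddTwo_injective n)
  rw [Nat.card_perm, Nat.card_fin, ← mul_right_inj' two_ne_zero, two_mul_nat_card_alternatingGroup,
    Nat.card_perm, Nat.card_fin, Nat.factorial_succ, Nat.factorial_succ] at h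
  refine Nat.eq_of_mul_eq_mul_right n.factorial_pos ?_
  rw [mul_assoc, h, mul_assoc]

end Equiv.Perm

theorem stmt_9_general (k : ℕ)
    (P : Sylow 2 (alternatingGroup (Fin (4 * k + 2))))
    (Q : Sylow 2 (Equiv.Perm (Fin (4 * k)))) :
    Nonempty (↥P ≃* ↥Q) := by
  refine Sylow.nonempty_mulEquiv_of_injective (toAlternatingGroupFinAddTwo_injective _) ?_ P Q
  have h := two_mul_index_range_toAlternatingGroupFinAddTwo (4 * k)
  have hindex : (toAlternatingGroupFinAddTwo (4 * k)).range.index = (2 * k + 1) * (4 * k + 1) := by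
    linarith
  rw [hindex, ← even_iff_two_dvd, Nat.not_even_iff_odd]
  exact (odd_two_mul_add_one k).mul ⟨2 * k, by ring⟩

/-- For every `k ≥ 1`, a Sylow 2-subgroup of the alternating group `A_{4k+2}` is
isomorphic to a Sylow 2-subgroup of the symmetric group `S_{4k}`. -/
theorem stmt_9 (k : ℕ) (hk : 1 ≤ k)
    (P : Sylow 2 (alternatingGroup (Fin (4 * k + 2))))
    (Q : Sylow 2 (Equiv.Perm (Fin (4 * k)))) :
    Nonempty (↥P ≃* ↥Q) :=
  stmt_9_general k P Q
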